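/- In the category whose objects are topological spaces and whose morphisms are local homeomorphisms, the object P described as the étalé space of the sheaf of local homeomorphisms into M over N (with projections ev : P → M and q : P → N) satisfies the universal property of the binary product of M and N: for any space T with local homeomorphisms a : T → M and b : T → N, there is a unique local homeomorphism c : T → P with ev ∘ c = a and q ∘ c = b, namely c(t) = germ_{b(t)}(a ∘ (b|_W)⁻¹) for W a neighborhood of t on which b is an open embedding. -/

import Mathlib

universe u

variable (M N : Type u) [TopologicalSpace M] [TopologicalSpace N]

/-- A local homeomorphism into `M` defined on an open subset of `N`. -/
structure LocalSection where
  dom : Set N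
  isOpen_dom : IsOpen dom
  toFun : N → M
  isLocalHomeomorphOn : IsLocalHomeomorphOn toFun dom

/-- Two local sections have the same germ at `y` if they agree on an open
neighborhood of `y`. -/
def germRel (y : N) (a b : { r : LocalSection M N // y ∈ r.dom }) : Prop :=
  ∃ W : Set N, IsOpen W ∧ y ∈ W ∧ W ⊆ a.1.dom ∩ b.1.dom ∧ Set.EqOn a.1.toFun b.1.toFun W

/-- The étalé space of the sheaf on `N` of local homeomorphisms into `M`: points are
germs of local homeomorphisms defined near points of `N`. -/
def GermSp : Type u :=
  Σ y : N, Quot (germRel M N y)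

/-- The germ topology: basic open sets are the sets of germs of a fixed local section. -/
instance : TopologicalSpace (GermSp M N) :=
  TopologicalSpace.generateFrom
    { B | ∃ r : LocalSection M N,
        B = { p : GermSp M N | ∃ h : p.1 ∈ r.dom, p.2 = Quot.mk _ ⟨r, h⟩ } }

/-- The étalé projection `q : P → N`. -/
def germProj : GermSp M N → N := Sigma.fst

/-- The evaluation map `ev : P → M`, sending `germ_y f` to `f y`. -/
def germEval : GermSp M N → M := fun p =>
  Quot.lift (fun s : { r : LocalSection M N // p.1 ∈ r.dom } => s.1.toFun p.1)
    (fun _ _ h => by obtain ⟨W, _, hyW, _, heq⟩ := h; exact heq hyW) p.2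

/-!
The lift of `b` sends `t` to the germ at `b t` of `a ∘ g`, for `g` a local inverse of `b` near
`t`; any two local inverses agree near `b t`, so near `t` the lift takes values in the basic
open set of germs of a single section, which makes it continuous. The étalé projection maps each
basic open set homeomorphically onto the domain of its section, so it is a local homeomorphism,
and hence so is any continuous lift of the local homeomorphism `b`.

For uniqueness, a continuous `c` with `germProj ∘ c = b` lands, near `t`, in the germs of one
section `r`, so `r ∘ b = germEval ∘ c` near `t`. As `b` is open, `germEval ∘ c` therefore
determines `r` on a neighbourhood of `b t`, hence the germ `c t`.
-/

open Topology Filter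

theorem equivalence_germRel (y : N) : Equivalence (germRel M N y) where
  refl r := ⟨r.1.dom, r.1.isOpen_dom, r.2, fun _ hx => ⟨hx, hx⟩, fun _ _ => rfl⟩
  symm := fun ⟨W, hW, hyW, hWsub, heq⟩ =>
    ⟨W, hW, hyW, fun _ hx => (hWsub hx).symm, heq.symm⟩
  trans := fun ⟨W, hW, hyW, hWsub, heq⟩ ⟨W', hW', hyW', hWsub', heq'⟩ =>
    ⟨W ∩ W', hW.inter hW', ⟨hyW, hyW'⟩, fun _ hx => ⟨(hWsub hx.1).1, (hWsub' hx.2).2⟩,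
      fun _ hx => (heq hx.1).trans (heq' hx.2)⟩

namespace LocalSection

variable {M N}

def germ (r : LocalSection M N) (y : N) (hy : y ∈ r.dom) : GermSp M N :=
  ⟨y, Quot.mk _ ⟨r, hy⟩⟩

def germs (r : LocalSection M N) : Set (GermSp M N) :=
  { p | ∃ h : p.1 ∈ r.dom, p.2 = Quot.mk _ ⟨r, h⟩ }

theorem germ_mem_germs (r : LocalSection M N) {y : N} (hy : y ∈ r.dom) :
    r.germ y hy ∈ r.germs :=
  ⟨hy, rfl⟩

theorem isOpen_germs (r : LocalSection M N) : IsOpen r.germs :=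
  TopologicalSpace.isOpen_generateFrom_of_mem ⟨r, rfl⟩

def restrict (r : LocalSection M N) {U : Set N} (hU : IsOpen U) : LocalSection M N where
  dom := r.dom ∩ U
  isOpen_dom := r.isOpen_dom.inter hU
  toFun := r.toFun
  isLocalHomeomorphOn := r.isLocalHomeomorphOn.mono Set.inter_subset_left

def ofComp {T : Type*} [TopologicalSpace T] {a : T → M} (ha : IsLocalHomeomorph a)
    (g : OpenPartialHomeomorph N T) : LocalSection M N where
  dom := g.source
  isOpen_dom := g.open_source
  toFun := a ∘ g
  isLocalHomeomorphOn :=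
    ha.isLocalHomeomorphOn.comp (fun _ hy => ⟨g, hy, rfl⟩) (Set.mapsTo_univ _ _)

end LocalSection

namespace GermSp

variable {M N}

theorem exists_mem_germs (p : GermSp M N) : ∃ r : LocalSection M N, p ∈ r.germs := by
  obtain ⟨⟨r, hr⟩, hp⟩ := Quot.exists_rep p.2
  exact ⟨r, hr, hp.symm⟩

theorem germEval_of_mem_germs {r : LocalSection M N} {p : GermSp M N} (hp : p ∈ r.germs) :
    germEval M N p = r.toFun p.1 := by
  obtain ⟨hr, hp⟩ := hp
  simp only [germEval, hp]

theorem eq_of_mem_germs {r s : LocalSection M N} {p p' : GermSp M N} (hp : p ∈ r.germs)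
    (hp' : p' ∈ s.germs) (hfst : p.1 = p'.1) (h : r.toFun =ᶠ[𝓝 p.1] s.toFun) : p = p' := by
  obtain ⟨y, g⟩ := p
  obtain ⟨y', g'⟩ := p'
  obtain rfl : y = y' := hfst
  obtain ⟨hr, hg : g = _⟩ := hp
  obtain ⟨hs, hg' : g' = _⟩ := hp'
  rw [hg, hg']
  obtain ⟨W, hWeq, hW, hyW⟩ := eventually_nhds_iff.mp h
  refine congrArg (Sigma.mk y) (Quot.sound ⟨W ∩ (r.dom ∩ s.dom),
    hW.inter (r.isOpen_dom.inter s.isOpen_dom), ⟨hyW, hr, hs⟩, Set.inter_subset_right,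
    fun x hx => hWeq x hx.1⟩)

theorem mem_germs_of_eventuallyEq {r s : LocalSection M N} {p : GermSp M N} (hp : p ∈ r.germs)
    (hs : p.1 ∈ s.dom) (h : r.toFun =ᶠ[𝓝 p.1] s.toFun) : p ∈ s.germs :=
  eq_of_mem_germs hp (s.germ_mem_germs hs) rfl h ▸ s.germ_mem_germs hs

theorem eventuallyEq_of_mem_germs {r s : LocalSection M N} {p : GermSp M N} (hr : p ∈ r.germs)
    (hs : p ∈ s.germs) : r.toFun =ᶠ[𝓝 p.1] s.toFun := by
  obtain ⟨hr, hpr⟩ := hr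
  obtain ⟨hs, hps⟩ := hs
  obtain ⟨W, hW, hyW, -, heq⟩ :=
    (equivalence_germRel M N p.1).eqvGen_iff.mp (Quot.eqvGen_exact (hpr.symm.trans hps))
  exact eventually_nhds_iff.mpr ⟨W, heq, hW, hyW⟩

theorem continuous_germProj : Continuous (germProj M N) := by
  refine continuous_def.mpr fun U hU => isOpen_iff_forall_mem_open.mpr fun p hpU => ?_
  obtain ⟨r, hr⟩ := exists_mem_germs p
  exact ⟨(r.restrict hU).germs, fun q hq => hq.1.2, (r.restrict hU).isOpen_germs,
    mem_germs_of_eventuallyEq hr ⟨hr.1, hpU⟩ EventuallyEq.rfl⟩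

theorem continuous_of_eventually_mem_germs {X : Type*} [TopologicalSpace X]
    {f : X → GermSp M N} (hf : Continuous (germProj M N ∘ f))
    (h : ∀ x, ∃ r : LocalSection M N, ∀ᶠ x' in 𝓝 x, f x' ∈ r.germs) : Continuous f := by
  refine continuous_generateFrom_iff.mpr ?_
  rintro _ ⟨s, rfl⟩
  refine isOpen_iff_mem_nhds.mpr fun x hxs => ?_
  obtain ⟨r, hr⟩ := h x
  obtain ⟨W, hWeq, hW, hxW⟩ := eventually_nhds_iff.mp
    ((eventuallyEq_of_mem_germs hr.self_of_nhds hxs).and (s.isOpen_dom.mem_nhds hxs.1))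
  filter_upwards [hr, hf.continuousAt.preimage_mem_nhds (hW.mem_nhds hxW)] with x' hx'r hx'W
  exact mem_germs_of_eventuallyEq hx'r (hWeq _ hx'W).2
    (eventually_nhds_iff.mpr ⟨W, fun z hz => (hWeq z hz).1, hW, hx'W⟩)

theorem isLocalHomeomorph_germProj : IsLocalHomeomorph (germProj M N) := by
  refine isLocalHomeomorph_iff_isOpenEmbedding_restrict.mpr fun p => ?_
  obtain ⟨r, hr⟩ := exists_mem_germs p
  let e : r.germs ≃ₜ r.dom :=
    { toFun := fun q => ⟨q.1.1, q.2.1⟩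
      invFun := fun y => ⟨r.germ y y.2, r.germ_mem_germs y.2⟩
      left_inv := fun q => Subtype.ext <|
        eq_of_mem_germs (r.germ_mem_germs q.2.1) q.2 rfl EventuallyEq.rfl
      right_inv := fun _ => rfl
      continuous_toFun := ((continuous_germProj.comp continuous_subtype_val).subtype_mk _)
      continuous_invFun := (continuous_of_eventually_mem_germs continuous_subtype_val
        fun _ => ⟨r, Eventually.of_forall fun y => r.germ_mem_germs y.2⟩).subtype_mk _ }
  exact ⟨r.germs, r.isOpen_germs.mem_nhds hr,
    r.isOpen_dom.isOpenEmbedding_subtypeVal.comp e.isOpenEmbedding⟩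

theorem eq_of_continuous_of_comp_eq {X : Type*} [TopologicalSpace X] {c c' : X → GermSp M N}
    (hc : Continuous c) (hc' : Continuous c') (hopen : IsOpenMap (germProj M N ∘ c))
    (hproj : germProj M N ∘ c = germProj M N ∘ c')
    (heval : germEval M N ∘ c = germEval M N ∘ c') : c = c' := by
  funext t
  obtain ⟨r, hr⟩ := exists_mem_germs (c t)
  obtain ⟨r', hr'⟩ := exists_mem_germs (c' t)
  have hV : c ⁻¹' r.germs ∩ c' ⁻¹' r'.germs ∈ 𝓝 t :=
    ((r.isOpen_germs.preimage hc).inter (r'.isOpen_germs.preimage hc')).mem_nhds ⟨hr, hr'⟩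
  refine eq_of_mem_germs hr hr' (congrFun hproj t) ?_
  filter_upwards [hopen.image_mem_nhds hV] with _ ⟨x, ⟨hxr, hxr'⟩, hx⟩
  subst hx
  calc r.toFun (c x).1 = germEval M N (c x) := (germEval_of_mem_germs hxr).symm
    _ = germEval M N (c' x) := congrFun heval x
    _ = r'.toFun (c x).1 :=
      (germEval_of_mem_germs hxr').trans (congrArg r'.toFun (congrFun hproj x).symm)

end GermSp

theorem OpenPartialHomeomorph.eventuallyEq_of_symm_eq {X Y : Type*} [TopologicalSpace X]
    [TopologicalSpace Y] {f : Y → X} {g g' : OpenPartialHomeomorph X Y} (hg : ⇑g.symm = f)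
    (hg' : ⇑g'.symm = f) {y : Y} (hy : y ∈ g.target) (hy' : y ∈ g'.target) :
    g =ᶠ[𝓝 (f y)] g' := by
  subst hg
  refine (g.symm.eventually_nhds _ hy).mpr ?_
  filter_upwards [g.open_target.mem_nhds hy, g'.open_target.mem_nhds hy'] with z hz hz'
  rw [g.right_inv hz, ← congrFun hg' z, g'.right_inv hz']

namespace GermSp

variable {M N} {T : Type*} [TopologicalSpace T] {a : T → M} {b : T → N}
  (ha : IsLocalHomeomorph a) (hb : IsLocalHomeomorph b)

noncomputable def lift (t : T) : GermSp M N :=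
  (LocalSection.ofComp ha (hb.localInverseAt t)).germ (b t)
    hb.apply_self_mem_localInverseAt_source

theorem lift_mem_germs_ofComp {g : OpenPartialHomeomorph N T} (hg : ⇑g.symm = b) {t : T}
    (ht : t ∈ g.target) : lift ha hb t ∈ (LocalSection.ofComp ha g).germs :=
  mem_germs_of_eventuallyEq (LocalSection.germ_mem_germs _ _) (hg ▸ g.map_target ht)
    ((OpenPartialHomeomorph.eventuallyEq_of_symm_eq (hb.localInverseAt_symm t) hg
      hb.self_mem_localInverseAt_target ht).fun_comp a)

theorem continuous_lift : Continuous (lift ha hb) :=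
  continuous_of_eventually_mem_germs hb.continuous fun t =>
    ⟨_, ((hb.localInverseAt t).open_target.eventually_mem hb.self_mem_localInverseAt_target).mono
      fun _ hx => lift_mem_germs_ofComp ha hb (hb.localInverseAt_symm t) hx⟩

theorem germProj_comp_lift : germProj M N ∘ lift ha hb = b := rfl

theorem germEval_comp_lift : germEval M N ∘ lift ha hb = a :=
  funext fun _ => (germEval_of_mem_germs (LocalSection.germ_mem_germs _ _)).trans
    (congrArg a hb.localInverseAt_apply_self)

theorem isLocalHomeomorph_lift : IsLocalHomeomorph (lift ha hb) :=
  .of_comp ((germProj_comp_lift ha hb).symm ▸ hb) isLocalHomeomorph_germProj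
    (continuous_lift ha hb)

end GermSp

/-- In the category of topological spaces and local homeomorphisms, the étalé space `P`
of the sheaf of local homeomorphisms into `M` over `N`, with `ev : P → M` and
`q : P → N`, is the binary product of `M` and `N`: for any space `T` with local
homeomorphisms `a : T → M` and `b : T → N` there is a unique local homeomorphism
`c : T → P` with `ev ∘ c = a` and `q ∘ c = b`. -/
theorem stmt_16 (T : Type u) [TopologicalSpace T] (a : T → M) (b : T → N)
    (ha : IsLocalHomeomorph a) (hb : IsLocalHomeomorph b) :
    ∃! c : T → GermSp M N, IsLocalHomeomorph c ∧
      germEval M N ∘ c = a ∧ germProj M N ∘ c = b := by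
  refine ⟨GermSp.lift ha hb, ⟨GermSp.isLocalHomeomorph_lift ha hb,
    GermSp.germEval_comp_lift ha hb, GermSp.germProj_comp_lift ha hb⟩, ?_⟩
  rintro c ⟨hc, heval, hproj⟩
  refine GermSp.eq_of_continuous_of_comp_eq hc.continuous (GermSp.continuous_lift ha hb)
    (hproj ▸ hb.isOpenMap) ?_ ?_
  · rw [hproj, GermSp.germProj_comp_lift]
  · rw [heval, GermSp.germEval_comp_lift]
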